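/- arXiv:2404.13839 — 2 statements merged into one kernel-verified Lean document; each statement's English description precedes it below -/
import Mathlib

section
/- Let D = (E, 𝓕) be an even delta-matroid with ∅ ∈ 𝓕 such that w(D ⋆ A) = w(D) for every A ⊆ E. If a, b ∈ E are distinct and {a, b} ∈ 𝓕, then every feasible set of maximum cardinality of D contains a or contains b. -/
open Finset
open scoped symmDiff

/-- A delta-matroid on ground set `E`: a nonempty collection `𝓕` of subsets of `E`
(the feasible sets) satisfying the Symmetric Exchange Axiom. -/
def IsDeltaMatroid {α : Type*} [DecidableEq α] (E : Finset α) (𝓕 : Set (Finset α)) : Prop :=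
  𝓕.Nonempty ∧ (∀ F ∈ 𝓕, F ⊆ E) ∧
    ∀ F₁ ∈ 𝓕, ∀ F₂ ∈ 𝓕, ∀ x ∈ F₁ ∆ F₂,
      ∃ y ∈ F₁ ∆ F₂, F₁ ∆ ({x, y} : Finset α) ∈ 𝓕

/-- The twist `D ⋆ A` of a set system: feasible sets are `A ∆ F` for `F` feasible. -/
def twist {α : Type*} [DecidableEq α] (𝓕 : Set (Finset α)) (A : Finset α) : Set (Finset α) :=
  (fun F => A ∆ F) '' 𝓕

/-- Width: maximum feasible cardinality minus minimum feasible cardinality. -/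
noncomputable def width {α : Type*} (𝓕 : Set (Finset α)) : ℕ :=
  sSup (Finset.card '' 𝓕) - sInf (Finset.card '' 𝓕)

/-- The deletion `D ∖ e`: feasible sets of `D` avoiding `e` (ground set `E \ {e}`). -/
def deleteSys {α : Type*} (𝓕 : Set (Finset α)) (e : α) : Set (Finset α) :=
  {F ∈ 𝓕 | e ∉ F}

/-- The contraction `D / e`: subsets `F` of `E \ {e}` with `F ∪ {e}` feasible in `D`. -/
def contractSys {α : Type*} [DecidableEq α] (E : Finset α) (𝓕 : Set (Finset α)) (e : α) :
    Set (Finset α) :=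
  {F | F ⊆ E.erase e ∧ F ∪ {e} ∈ 𝓕}

/-- A set system is even if any two feasible sets have symmetric difference of even size. -/
def IsEvenSys {α : Type*} [DecidableEq α] (𝓕 : Set (Finset α)) : Prop :=
  ∀ F₁ ∈ 𝓕, ∀ F₂ ∈ 𝓕, Even (F₁ ∆ F₂).card

/-- The set system `(E, 𝓕)` contains an S-pattern at `F` with witnesses `x₁ x₂ y₁ y₂`. -/
def SPatternAt {α : Type*} [DecidableEq α] (E : Finset α) (𝓕 : Set (Finset α))
    (F : Finset α) (x₁ x₂ y₁ y₂ : α) : Prop :=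
  F ∈ 𝓕 ∧ x₁ ∈ F ∧ x₂ ∈ F ∧ x₁ ≠ x₂ ∧
    y₁ ∈ E \ F ∧ y₂ ∈ E \ F ∧ y₁ ≠ y₂ ∧
    F ∆ ({x₁, y₁} : Finset α) ∈ 𝓕 ∧ F ∆ ({x₂, y₂} : Finset α) ∈ 𝓕 ∧
    F ∆ ({x₁, y₂} : Finset α) ∈ 𝓕 ∧ F ∆ ({x₂, y₁} : Finset α) ∈ 𝓕 ∧
    F ∆ ({x₁, y₁} : Finset α) ∆ ({x₂, y₂} : Finset α) ∈ 𝓕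

/-!
Since `∅` is feasible and `F` has maximum size, `w(D) = |F|`. If `F` missed both `a` and `b`,
the twist `D ⋆ F` would contain `F ∆ F = ∅` and `F ∆ {a, b} = F ∪ {a, b}`, so its width would
exceed `|F|`.
-/

section Width

variable {α : Type*} {𝓕 : Set (Finset α)}

lemma bddAbove_card_image_of_forall_subset {E : Finset α} (h𝓕 : ∀ F ∈ 𝓕, F ⊆ E) :
    BddAbove (Finset.card '' 𝓕) :=
  ⟨E.card, by rintro _ ⟨F, hF, rfl⟩; exact card_le_card (h𝓕 F hF)⟩

lemma sInf_card_image_eq_zero (hempty : ∅ ∈ 𝓕) : sInf (Finset.card '' 𝓕) = 0 :=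
  Nat.sInf_eq_zero.mpr (Or.inl ⟨∅, hempty, card_empty⟩)

lemma width_eq_card_of_empty_mem {F : Finset α} (hempty : ∅ ∈ 𝓕) (hF : F ∈ 𝓕)
    (hmax : ∀ G ∈ 𝓕, G.card ≤ F.card) : width 𝓕 = F.card := by
  have hgreatest : IsGreatest (Finset.card '' 𝓕) F.card :=
    ⟨⟨F, hF, rfl⟩, by rintro _ ⟨G, hG, rfl⟩; exact hmax G hG⟩
  rw [width, hgreatest.csSup_eq, sInf_card_image_eq_zero hempty, Nat.sub_zero]

lemma card_le_width_of_empty_mem {G : Finset α} (hempty : ∅ ∈ 𝓕)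
    (hbdd : BddAbove (Finset.card '' 𝓕)) (hG : G ∈ 𝓕) : G.card ≤ width 𝓕 := by
  rw [width, sInf_card_image_eq_zero hempty, Nat.sub_zero]
  exact le_csSup hbdd ⟨G, hG, rfl⟩

end Width

section Twist

variable {α : Type*} [DecidableEq α] {𝓕 : Set (Finset α)}

lemma symmDiff_mem_twist {A F : Finset α} (hF : F ∈ 𝓕) : A ∆ F ∈ twist 𝓕 A :=
  ⟨F, hF, rfl⟩

lemma empty_mem_twist_self {F : Finset α} (hF : F ∈ 𝓕) : ∅ ∈ twist 𝓕 F := by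
  simpa using symmDiff_mem_twist (A := F) hF

lemma subset_of_mem_twist {E A G : Finset α} (h𝓕 : ∀ F ∈ 𝓕, F ⊆ E) (hA : A ⊆ E)
    (hG : G ∈ twist 𝓕 A) : G ⊆ E := by
  obtain ⟨F, hF, rfl⟩ := hG
  exact symmDiff_le_sup.trans (sup_le hA (h𝓕 F hF))

end Twist

lemma card_lt_card_symmDiff_of_disjoint {α : Type*} [DecidableEq α] {F S : Finset α}
    (hdisj : Disjoint F S) (hS : S.Nonempty) : F.card < (F ∆ S).card := by
  rw [hdisj.symmDiff_eq_sup, sup_eq_union, card_union_of_disjoint hdisj]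
  exact Nat.lt_add_of_pos_right hS.card_pos

theorem max_feasible_meets_pair_general {α : Type*} [DecidableEq α] (E : Finset α)
    (𝓕 : Set (Finset α)) (hD : IsDeltaMatroid E 𝓕)
    (hempty : ∅ ∈ 𝓕) (hw : ∀ A ⊆ E, width (twist 𝓕 A) = width 𝓕)
    (a b : α)
    (hpair : ({a, b} : Finset α) ∈ 𝓕) :
    ∀ F ∈ 𝓕, (∀ G ∈ 𝓕, G.card ≤ F.card) → a ∈ F ∨ b ∈ F := by
  intro F hF hmax
  by_contra! hmiss
  have hFE : F ⊆ E := hD.2.1 F hF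
  have hdisj : Disjoint F {a, b} := by
    simp [disjoint_insert_right, hmiss.1, hmiss.2]
  have hbdd : BddAbove (Finset.card '' twist 𝓕 F) :=
    bddAbove_card_image_of_forall_subset fun _ hG => subset_of_mem_twist hD.2.1 hFE hG
  have hle : (F ∆ {a, b}).card ≤ width (twist 𝓕 F) :=
    card_le_width_of_empty_mem (empty_mem_twist_self hF) hbdd (symmDiff_mem_twist hpair)
  rw [hw F hFE, width_eq_card_of_empty_mem hempty hF hmax] at hle
  exact (card_lt_card_symmDiff_of_disjoint hdisj (insert_nonempty a {b})).not_ge hle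

/-- if `D` is an even delta-matroid with `∅` feasible, all twists have the
same width as `D`, and `{a, b} ∈ 𝓕` with `a ≠ b`, then every maximum-cardinality feasible
set contains `a` or `b`. -/
theorem max_feasible_meets_pair {α : Type*} [DecidableEq α] (E : Finset α)
    (𝓕 : Set (Finset α)) (hD : IsDeltaMatroid E 𝓕) (hEv : IsEvenSys 𝓕)
    (hempty : ∅ ∈ 𝓕) (hw : ∀ A ⊆ E, width (twist 𝓕 A) = width 𝓕)
    (a b : α) (ha : a ∈ E) (hb : b ∈ E) (hab : a ≠ b)
    (hpair : ({a, b} : Finset α) ∈ 𝓕) :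
    ∀ F ∈ 𝓕, (∀ G ∈ 𝓕, G.card ≤ F.card) → a ∈ F ∨ b ∈ F :=
  max_feasible_meets_pair_general E 𝓕 hD hempty hw a b hpair
end

section
/- Let D = (E, 𝓕) be an even delta-matroid with ∅ ∈ 𝓕, and suppose x ∈ E belongs to every feasible set of maximum cardinality of D (in particular some feasible set is nonempty). Then w(D ⋆ {x}) = w(D) − 2. -/
/-!
Since `∅` is feasible and `D` is even, every feasible set has even size. Hence the minimum size
in `D` is `0`, and every twisted set `{x} ∆ F` has odd size, so the minimum in `D ⋆ {x}` is `1`.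
A maximum feasible set `F` contains `x`, giving a twisted set of size `|F| - 1`; a feasible set
avoiding `x` is not maximum, hence by parity at least two smaller than `F`, so adding `x` to it
stays within `|F| - 1`.
-/

open Finset
open scoped symmDiff

namespace Finset

variable {α : Type*} [DecidableEq α] {x : α} {F : Finset α}

theorem singleton_symmDiff_of_mem (h : x ∈ F) : {x} ∆ F = F.erase x := by
  ext a
  by_cases hax : a = x <;> simp [mem_symmDiff, hax, h]

theorem singleton_symmDiff_of_notMem (h : x ∉ F) : {x} ∆ F = insert x F := by
  ext a
  by_cases hax : a = x <;> simp [mem_symmDiff, hax, h]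

theorem odd_card_singleton_symmDiff (hF : Even #F) : Odd #({x} ∆ F) := by
  by_cases h : x ∈ F
  · have : 0 < #F := card_pos.mpr ⟨x, h⟩
    rw [singleton_symmDiff_of_mem h, card_erase_of_mem h]
    exact Nat.Even.sub_odd this hF odd_one
  · rw [singleton_symmDiff_of_notMem h, card_insert_of_notMem h]
    exact hF.add_one

end Finset

theorem width_eq_of_isGreatest_of_isLeast {α : Type*} {𝓕 : Set (Finset α)} {M m : ℕ}
    (hM : IsGreatest (Finset.card '' 𝓕) M) (hm : IsLeast (Finset.card '' 𝓕) m) :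
    width 𝓕 = M - m := by
  rw [width, hM.csSup_eq, hm.csInf_eq]

theorem exists_isGreatest_card_of_forall_subset {α : Type*} {E : Finset α}
    {𝓕 : Set (Finset α)} (hne : 𝓕.Nonempty) (hsub : ∀ F ∈ 𝓕, F ⊆ E) :
    ∃ M, IsGreatest (Finset.card '' 𝓕) M := by
  have hbdd : BddAbove (Finset.card '' 𝓕) := by
    refine ⟨#E, ?_⟩
    rintro _ ⟨F, hF, rfl⟩
    exact card_le_card (hsub F hF)
  exact ⟨_, Nat.sSup_mem (hne.image _) hbdd, fun _ hn => le_csSup hbdd hn⟩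

theorem IsEvenSys.even_card {α : Type*} [DecidableEq α] {𝓕 : Set (Finset α)}
    (hEv : IsEvenSys 𝓕) (hempty : ∅ ∈ 𝓕) {F : Finset α} (hF : F ∈ 𝓕) : Even #F := by
  simpa only [bot_eq_empty.symm, symmDiff_bot] using hEv F hF ∅ hempty

section Twist

variable {α : Type*} [DecidableEq α] {𝓕 : Set (Finset α)} {x : α}

theorem isLeast_card_twist_singleton (heven : ∀ F ∈ 𝓕, Even #F) (hempty : ∅ ∈ 𝓕) :
    IsLeast (Finset.card '' twist 𝓕 {x}) 1 := by
  refine ⟨⟨{x}, ⟨∅, hempty, by simp⟩, card_singleton x⟩, ?_⟩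
  rintro _ ⟨_, ⟨F, hF, rfl⟩, rfl⟩
  exact (odd_card_singleton_symmDiff (heven F hF)).pos

theorem isGreatest_card_twist_singleton (heven : ∀ F ∈ 𝓕, Even #F) {M : ℕ}
    (hM : IsGreatest (Finset.card '' 𝓕) M) (hmax : ∀ F ∈ 𝓕, #F = M → x ∈ F) :
    IsGreatest (Finset.card '' twist 𝓕 {x}) (M - 1) := by
  obtain ⟨⟨F₀, hF₀, hF₀M⟩, hub⟩ := hM
  refine ⟨⟨{x} ∆ F₀, ⟨F₀, hF₀, rfl⟩, ?_⟩, ?_⟩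
  · rw [singleton_symmDiff_of_mem (hmax F₀ hF₀ hF₀M), card_erase_of_mem (hmax F₀ hF₀ hF₀M),
      hF₀M]
  rintro _ ⟨_, ⟨F, hF, rfl⟩, rfl⟩
  dsimp only
  have hFM : #F ≤ M := hub ⟨F, hF, rfl⟩
  by_cases hxF : x ∈ F
  · rw [singleton_symmDiff_of_mem hxF, card_erase_of_mem hxF]
    omega
  · have hFM' : #F ≠ M := fun h => hxF (hmax F hF h)
    obtain ⟨k, hk⟩ := heven F hF
    obtain ⟨l, hl⟩ := hF₀M ▸ heven F₀ hF₀
    rw [singleton_symmDiff_of_notMem hxF, card_insert_of_notMem hxF]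
    omega

end Twist

theorem width_twist_singleton_general {α : Type*} [DecidableEq α] (E : Finset α)
    (𝓕 : Set (Finset α)) (hD : IsDeltaMatroid E 𝓕) (hEv : IsEvenSys 𝓕)
    (hempty : ∅ ∈ 𝓕) (x : α)
    (hmax : ∀ F ∈ 𝓕, (∀ G ∈ 𝓕, G.card ≤ F.card) → x ∈ F) :
    width (twist 𝓕 {x}) = width 𝓕 - 2 := by
  have heven : ∀ F ∈ 𝓕, Even #F := fun F hF => hEv.even_card hempty hF
  obtain ⟨M, hM⟩ := exists_isGreatest_card_of_forall_subset hD.1 hD.2.1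
  have hmin : IsLeast (Finset.card '' 𝓕) 0 := ⟨⟨∅, hempty, card_empty⟩, fun _ _ => Nat.zero_le _⟩
  have hmax' : ∀ F ∈ 𝓕, #F = M → x ∈ F := fun F hF hFM =>
    hmax F hF fun G hG => hFM ▸ hM.2 ⟨G, hG, rfl⟩
  rw [width_eq_of_isGreatest_of_isLeast hM hmin,
    width_eq_of_isGreatest_of_isLeast (isGreatest_card_twist_singleton heven hM hmax')
      (isLeast_card_twist_singleton heven hempty)]
  omega

/-- if `D` is an even delta-matroid with `∅` feasible and `x ∈ E` belongs
to every maximum-cardinality feasible set, then `w(D ⋆ {x}) = w(D) - 2`. -/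
theorem width_twist_singleton {α : Type*} [DecidableEq α] (E : Finset α)
    (𝓕 : Set (Finset α)) (hD : IsDeltaMatroid E 𝓕) (hEv : IsEvenSys 𝓕)
    (hempty : ∅ ∈ 𝓕) (x : α) (hx : x ∈ E)
    (hmax : ∀ F ∈ 𝓕, (∀ G ∈ 𝓕, G.card ≤ F.card) → x ∈ F) :
    width (twist 𝓕 {x}) = width 𝓕 - 2 :=
  width_twist_singleton_general E 𝓕 hD hEv hempty x hmax
end
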